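/- arXiv:2302.09849 — 2 statements merged into one kernel-verified Lean document; each statement's English description precedes it below -/
import Mathlib

section
/- Suppose that F is an r-graph and P is a minimal pattern such that (F,P) is a Turán pair. Then ex(n,F) is 4·C(n−1,r−2)-smooth, i.e. |δ(n,F) − d(n−1,F)| ≤ 4·C(n−1,r−2) for all n, where δ(n,F) = ex(n,F) − ex(n−1,F) and d(n,F) = r·ex(n,F)/n. -/
open Filter

namespace DensityCH

/-- An `r`-uniform hypergraph with vertices in `ℕ`:
a finite vertex set together with a set of `r`-element edges. -/
structure HGraph (r : ℕ) where
  verts : Finset ℕ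
  edges : Finset (Finset ℕ)
  edges_sub : ∀ e ∈ edges, e ⊆ verts
  edges_card : ∀ e ∈ edges, e.card = r

namespace HGraph

/-- Build an `r`-graph from a vertex set and a set of candidate edges,
keeping exactly the well-formed candidates. -/
def ofEdges (r : ℕ) (V : Finset ℕ) (E : Finset (Finset ℕ)) : HGraph r where
  verts := V
  edges := E.filter fun e => e ⊆ V ∧ e.card = r
  edges_sub := fun e he => ((Finset.mem_filter.mp he).2).1
  edges_card := fun e he => ((Finset.mem_filter.mp he).2).2

variable {r : ℕ}

/-- `H` contains a copy of `F`, i.e. a subgraph isomorphic to `F`. -/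
def IsCopyIn (F H : HGraph r) : Prop :=
  ∃ f : ℕ → ℕ, Set.InjOn f ↑F.verts ∧ (∀ v ∈ F.verts, f v ∈ H.verts) ∧
    ∀ e ∈ F.edges, e.image f ∈ H.edges

/-- The subgraph of `H` induced on `S`. -/
def induce (H : HGraph r) (S : Finset ℕ) : HGraph r :=
  ofEdges r (H.verts ∩ S) (H.edges.filter fun e => e ⊆ S)

/-- Delete a vertex from `H`. -/
def deleteVert (H : HGraph r) (v : ℕ) : HGraph r :=
  ofEdges r (H.verts.erase v) (H.edges.filter fun e => v ∉ e)

/-- The degree of a vertex. -/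
def deg (H : HGraph r) (v : ℕ) : ℕ := (H.edges.filter fun e => v ∈ e).card

/-- The maximum degree `Δ(H)`. -/
def maxDeg (H : HGraph r) : ℕ := H.verts.sup H.deg

/-- The minimum degree `δ(H)`. -/
def minDeg (H : HGraph r) : ℕ :=
  if h : H.verts.Nonempty then H.verts.inf' h H.deg else 0

/-- The average degree `d(H) = r·|E(H)|/|V(H)|`. -/
noncomputable def avgDeg (H : HGraph r) : ℝ :=
  (r : ℝ) * (H.edges.card : ℝ) / (H.verts.card : ℝ)

/-- `H` contains `k` pairwise vertex-disjoint copies of `F`, i.e. `ν(F,H) ≥ k`. -/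
def HasMatching (F H : HGraph r) (k : ℕ) : Prop :=
  ∃ S : Fin k → Finset ℕ,
    (∀ i, S i ⊆ H.verts ∧ (S i).card = F.verts.card) ∧
    (∀ i j, i ≠ j → Disjoint (S i) (S j)) ∧
    ∀ i, F.IsCopyIn (H.induce (S i))

/-- Isomorphism of hypergraphs. -/
def Iso (G H : HGraph r) : Prop :=
  ∃ f : ℕ → ℕ, Set.BijOn f ↑G.verts ↑H.verts ∧
    ∀ e ∈ Finset.powersetCard r G.verts, (e ∈ G.edges ↔ e.image f ∈ H.edges)

/-- The join `G ⋈ H`: all edges of `G`, all edges of `H`, and all `r`-sets meeting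
both vertex sets. -/
def join (G H : HGraph r) : HGraph r :=
  ofEdges r (G.verts ∪ H.verts)
    (G.edges ∪ H.edges ∪ ((Finset.powersetCard r (G.verts ∪ H.verts)).filter
      fun e => (e ∩ G.verts).Nonempty ∧ (e ∩ H.verts).Nonempty))

end HGraph

/-- The complete `r`-graph on a vertex set `S`. -/
def completeOn (r : ℕ) (S : Finset ℕ) : HGraph r :=
  HGraph.ofEdges r S (Finset.powersetCard r S)

/-- The `r`-graph on `V` with no edges. -/
def emptyOn (r : ℕ) (V : Finset ℕ) : HGraph r := HGraph.ofEdges r V ∅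

/-- The Turán number `ex(n,F)`. -/
noncomputable def exN (r n : ℕ) (F : HGraph r) : ℕ :=
  sSup {m | ∃ H : HGraph r, H.verts.card = n ∧ ¬ F.IsCopyIn H ∧ H.edges.card = m}

/-- `d(n,F) = r·ex(n,F)/n`. -/
noncomputable def dN (r n : ℕ) (F : HGraph r) : ℝ := (r : ℝ) * (exN r n F : ℝ) / (n : ℝ)

/-- `δ(n,F) = ex(n,F) − ex(n−1,F)` (as a real number). -/
noncomputable def deltaN (r n : ℕ) (F : HGraph r) : ℝ := (exN r n F : ℝ) - (exN r (n-1) F : ℝ)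

/-- `x` is the Turán density `π(F)`, i.e. the limit of `ex(n,F)/C(n,r)`. -/
def HasTuranDensity (r : ℕ) (F : HGraph r) (x : ℝ) : Prop :=
  Tendsto (fun n : ℕ => (exN r n F : ℝ) / (n.choose r : ℝ)) atTop (nhds x)

/-- `ex(n,(t+1)F)`: the maximum number of edges of an `n`-vertex `r`-graph with no
`t+1` pairwise vertex-disjoint copies of `F`. -/
noncomputable def exMatchN (r n t : ℕ) (F : HGraph r) : ℕ :=
  sSup {m | ∃ H : HGraph r, H.verts.card = n ∧ ¬ F.HasMatching H (t+1) ∧ H.edges.card = m}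

/-- `H ∈ EX(n,F)`. -/
def IsExtremalFree (r n : ℕ) (F H : HGraph r) : Prop :=
  H.verts.card = n ∧ ¬ F.IsCopyIn H ∧ H.edges.card = exN r n F

/-- `H ∈ EX(n,(t+1)F)`. -/
def IsExtremalMatchingFree (r n t : ℕ) (F H : HGraph r) : Prop :=
  H.verts.card = n ∧ ¬ F.HasMatching H (t+1) ∧ H.edges.card = exMatchN r n t F

/-- `F` is `(f1, f2)`-bounded at `n`. -/
def BoundedAt (r n : ℕ) (F : HGraph r) (f1 f2 : ℝ) : Prop :=
  ∀ H : HGraph r, H.verts.card = n → ¬ F.IsCopyIn H →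
    dN r n F - f1 ≤ H.avgDeg → (H.maxDeg : ℝ) ≤ dN r n F + f2

/-- `ex(·,F)` is `g`-smooth at `n`: `|δ(n,F) − d(n−1,F)| ≤ g(n)`. -/
def SmoothAt (r n : ℕ) (F : HGraph r) (g : ℝ) : Prop :=
  |deltaN r n F - dN r (n-1) F| ≤ g

/-- The collection `H 0, …, H t` (on a common vertex set) has a rainbow `F`-matching. -/
def HasRainbowMatching (r t : ℕ) (F : HGraph r) (H : Fin (t+1) → HGraph r) : Prop :=
  ∃ S : Fin (t+1) → Finset ℕ,
    (∀ i, S i ⊆ (H i).verts ∧ (S i).card = F.verts.card) ∧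
    (∀ i j, i ≠ j → Disjoint (S i) (S j)) ∧
    ∀ i, F.IsCopyIn ((H i).induce (S i))

/-!  Patterns -/

/-- An `r`-uniform pattern: a finite index set together with a collection of
`r`-multisets on it. -/
structure Pattern (r : ℕ) where
  idx : Finset ℕ
  mE : Finset (Multiset ℕ)
  card_eq : ∀ s ∈ mE, Multiset.card s = r
  mem_idx : ∀ s ∈ mE, ∀ i ∈ s, i ∈ idx

namespace Pattern

variable {r : ℕ}

/-- The pattern `P − i`. -/
def erase (P : Pattern r) (i : ℕ) : Pattern r where
  idx := P.idx.erase i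
  mE := P.mE.filter fun s => i ∉ s
  card_eq := fun s hs => P.card_eq s (Finset.mem_filter.mp hs).1
  mem_idx := by
    intro s hs j hj
    have h1 := Finset.mem_filter.mp hs
    refine Finset.mem_erase.mpr ⟨?_, P.mem_idx s h1.1 j hj⟩
    rintro rfl
    exact h1.2 hj

/-- `H` is a `P`-construction: a blowup of the pattern `P`. -/
def IsConstruction (P : Pattern r) (H : HGraph r) : Prop :=
  ∃ part : ℕ → ℕ, (∀ v ∈ H.verts, part v ∈ P.idx) ∧
    ∀ e : Finset ℕ, e ∈ H.edges ↔ (e ⊆ H.verts ∧ e.card = r ∧ Multiset.map part e.val ∈ P.mE)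

/-- `H` is a `P`-subconstruction: a subgraph of a `P`-construction. -/
def IsSubconstruction (P : Pattern r) (H : HGraph r) : Prop :=
  ∃ G : HGraph r, P.IsConstruction G ∧ H.verts ⊆ G.verts ∧ H.edges ⊆ G.edges

end Pattern

/-- `Λ(P,n)`: the maximum number of edges of an `n`-vertex `P`-construction. -/
noncomputable def patEx (r : ℕ) (P : Pattern r) (n : ℕ) : ℕ :=
  sSup {m | ∃ H : HGraph r, P.IsConstruction H ∧ H.verts.card = n ∧ H.edges.card = m}

/-- The Lagrangian `λ(P) = lim Λ(P,n)/C(n,r)`. -/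
noncomputable def patLagrangian (r : ℕ) (P : Pattern r) : ℝ :=
  limUnder atTop fun n : ℕ => (patEx r P n : ℝ) / (n.choose r : ℝ)

/-- The pattern `P` is minimal: `λ(P−i) < λ(P)` for all `i`. -/
def Pattern.Minimal {r : ℕ} (P : Pattern r) : Prop :=
  ∀ i ∈ P.idx, patLagrangian r (P.erase i) < patLagrangian r P

/-- `(F,P)` is a Turán pair. -/
def IsTuranPair (r : ℕ) (F : HGraph r) (P : Pattern r) : Prop :=
  (∀ H : HGraph r, P.IsConstruction H → ¬ F.IsCopyIn H) ∧
  (∀ H : HGraph r, ¬ F.IsCopyIn H → H.edges.card = exN r H.verts.card F →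
    P.IsConstruction H)

/-- `F` is edge-stable with respect to `P` (with Turán density `π`). -/
def EdgeStable (r : ℕ) (F : HGraph r) (P : Pattern r) (π : ℝ) : Prop :=
  ∀ δ : ℝ, 0 < δ → ∃ N₀ : ℕ, ∃ ζ : ℝ, 0 < ζ ∧
    ∀ H : HGraph r, N₀ ≤ H.verts.card → ¬ F.IsCopyIn H →
      (π - ζ) * (H.verts.card.choose r : ℝ) ≤ (H.edges.card : ℝ) →
      ∃ H' : HGraph r, H'.verts ⊆ H.verts ∧ H'.edges ⊆ H.edges ∧
        (π - δ) * (H.verts.card.choose r : ℝ) ≤ (H'.edges.card : ℝ) ∧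
        P.IsSubconstruction H'

/-- `F` is weakly vertex-extendable with respect to `P` (with Turán density `π`). -/
def WeaklyVertexExtendable (r : ℕ) (F : HGraph r) (P : Pattern r) (π : ℝ) : Prop :=
  ∀ δ : ℝ, 0 < δ → ∃ N₀ : ℕ, ∃ ζ : ℝ, 0 < ζ ∧
    ∀ H : HGraph r, N₀ ≤ H.verts.card → ¬ F.IsCopyIn H →
      (π - ζ) * (((H.verts.card - 1).choose (r-1) : ℕ) : ℝ) ≤ (H.minDeg : ℝ) →
      ∀ v ∈ H.verts, P.IsSubconstruction (H.deleteVert v) →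
        (H.deg v : ℝ) ≤ (π + δ) * (((H.verts.card - 1).choose (r-1) : ℕ) : ℝ)

/-- `F` is degree-stable with respect to `P` (with Turán density `π`). -/
def DegreeStable (r : ℕ) (F : HGraph r) (P : Pattern r) (π : ℝ) : Prop :=
  ∃ ζ : ℝ, 0 < ζ ∧ ∃ N₀ : ℕ,
    ∀ H : HGraph r, N₀ ≤ H.verts.card → ¬ F.IsCopyIn H →
      (π - ζ) * (((H.verts.card - 1).choose (r-1) : ℕ) : ℝ) ≤ (H.minDeg : ℝ) →
      P.IsSubconstruction H

/-!  Concrete constructions -/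

/-- The generalized Turán graph `T_r(·,ℓ)` on vertex set `V` (parts are residue
classes mod `ℓ`; on an interval these are balanced). -/
def turanOn (r ℓ : ℕ) (V : Finset ℕ) : HGraph r :=
  HGraph.ofEdges r V ((Finset.powersetCard r V).filter
    fun e => ∀ u ∈ e, ∀ v ∈ e, u % ℓ = v % ℓ → u = v)

/-- The `r`-graph on `V₁ ∪ V₂` whose edges are all `r`-sets meeting both parts. -/
def crossOn (r : ℕ) (V₁ V₂ : Finset ℕ) : HGraph r :=
  HGraph.ofEdges r (V₁ ∪ V₂) ((Finset.powersetCard r (V₁ ∪ V₂)).filter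
    fun e => (e ∩ V₁).Nonempty ∧ (e ∩ V₂).Nonempty)

/-- The `r`-graph on `V₁ ∪ V₂` whose edges are all `r`-sets meeting `V₁` in an odd
number of vertices. -/
def oddCross (r : ℕ) (V₁ V₂ : Finset ℕ) : HGraph r :=
  HGraph.ofEdges r (V₁ ∪ V₂) ((Finset.powersetCard r (V₁ ∪ V₂)).filter
    fun e => Odd (e ∩ V₁).card)

/-- The Fano plane. -/
def fano : HGraph 3 :=
  HGraph.ofEdges 3 (Finset.Icc 1 7)
    {({1,2,3} : Finset ℕ), {3,4,5}, {5,6,1}, {1,7,4}, {2,7,5}, {3,7,6}, {2,4,6}}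

/-- The generalized triangle `𝕋_r`, with edges `{1,…,r}`, `{1,…,r−1,r+1}` and
`{r,…,2r−1}`. -/
def genTri (r : ℕ) : HGraph r :=
  HGraph.ofEdges r (Finset.Icc 1 (2*r - 1))
    {Finset.Icc 1 r, Finset.Icc 1 (r-1) ∪ {r+1}, Finset.Icc r (2*r - 1)}

/-- `G` is a blowup of the `r`-graph `W` (viewing `W` as a pattern). -/
def IsBlowupOf {r : ℕ} (W G : HGraph r) : Prop :=
  ∃ part : ℕ → ℕ, (∀ v ∈ G.verts, part v ∈ W.verts) ∧
    ∀ e : Finset ℕ, e ∈ G.edges ↔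
      (e ⊆ G.verts ∧ e.card = r ∧ ∃ f ∈ W.edges, Multiset.map part e.val = f.val)

/-- The expansion `H^F` of an `r`-graph `F`: for every pair of vertices not covered
by an edge of `F`, add an edge consisting of this pair plus `r−2` new vertices,
these sets of new vertices being pairwise disjoint. -/
def HGraph.expansion {r : ℕ} (F : HGraph r) : HGraph r :=
  HGraph.ofEdges r
    (F.verts ∪ (((F.verts ×ˢ F.verts).filter fun p =>
        p.1 < p.2 ∧ ∀ e ∈ F.edges, ¬ (p.1 ∈ e ∧ p.2 ∈ e)).biUnion fun p =>
      (Finset.range (r-2)).image fun s =>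
        (F.verts.sup id + 1) + (p.1 * (F.verts.sup id + 1) + p.2) * r + s))
    (F.edges ∪ (((F.verts ×ˢ F.verts).filter fun p =>
        p.1 < p.2 ∧ ∀ e ∈ F.edges, ¬ (p.1 ∈ e ∧ p.2 ∈ e)).image fun p =>
      insert p.1 (insert p.2 ((Finset.range (r-2)).image fun s =>
        (F.verts.sup id + 1) + (p.1 * (F.verts.sup id + 1) + p.2) * r + s))))

/-- A `2`-graph is a tree on `k` vertices: `k` vertices, `k−1` edges, connected. -/
def IsTreeGraph (k : ℕ) (T : HGraph 2) : Prop :=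
  T.verts.card = k ∧ T.edges.card = k - 1 ∧
  ∀ S : Finset ℕ, S ⊆ T.verts → S.Nonempty → S ≠ T.verts →
    ∃ e ∈ T.edges, (e ∩ S).Nonempty ∧ (e \ S).Nonempty

/-- `T` satisfies the Erdős–Sós property for `k`: every graph with average degree
greater than `k−2` contains `T`. -/
def ErdosSos (k : ℕ) (T : HGraph 2) : Prop :=
  ∀ G : HGraph 2, ((k : ℝ) - 2) * (G.verts.card : ℝ) < 2 * (G.edges.card : ℝ) →
    T.IsCopyIn G

/-- The `(r−2)`-expansion `Exp(T)` of a `2`-graph `T`: enlarge every edge by one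
common fixed set of `r−2` new vertices. -/
def expTree (r : ℕ) (T : HGraph 2) : HGraph r :=
  HGraph.ofEdges r
    (T.verts ∪ ((Finset.range (r-2)).image fun s => T.verts.sup id + 1 + s))
    (T.edges.image fun e =>
      e ∪ ((Finset.range (r-2)).image fun s => T.verts.sup id + 1 + s))

/-- The chromatic number of a `2`-graph. -/
noncomputable def chrom (F : HGraph 2) : ℕ :=
  sInf {k | ∃ c : ℕ → ℕ, (∀ v ∈ F.verts, c v < k) ∧
    ∀ e ∈ F.edges, ∀ u ∈ e, ∀ v ∈ e, u ≠ v → c u ≠ c v}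

/-- A graph is edge-critical if deleting some edge lowers its chromatic number. -/
def EdgeCritical (F : HGraph 2) : Prop :=
  ∃ e ∈ F.edges, chrom (HGraph.ofEdges 2 F.verts (F.edges.erase e)) < chrom F

/-- `H` is semibipartite: the vertex set splits into `V₁ ∪ V₂` so that every edge
has exactly one vertex in `V₁`. -/
def Semibipartite (r : ℕ) (H : HGraph r) : Prop :=
  ∃ V₁ ⊆ H.verts, ∀ e ∈ H.edges, (e ∩ V₁).card = 1

/-- `H` is a `K_ℓ^r`-subconstruction, i.e. an `ℓ`-partite `r`-graph. -/
def IsKlSub (r ℓ : ℕ) (H : HGraph r) : Prop :=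
  ∃ f : ℕ → ℕ, (∀ v ∈ H.verts, f v < ℓ) ∧
    ∀ e ∈ H.edges, ∀ u ∈ e, ∀ v ∈ e, f u = f v → u = v

/-- The Lagrangian `λ(W)` of an `r`-graph `W`, viewing `W` as a pattern. -/
noncomputable def hgLagrangian (r : ℕ) (W : HGraph r) : ℝ :=
  limUnder atTop fun n : ℕ =>
    ((sSup {m | ∃ G : HGraph r, IsBlowupOf W G ∧ G.verts.card = n ∧ G.edges.card = m} : ℕ) : ℝ)
      / (n.choose r : ℝ)

/-- The `r`-graph `B(r,ℓ+1)`. -/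
def BGraph (r ℓ : ℕ) : HGraph r :=
  HGraph.ofEdges r (Finset.Icc 1 (ℓ+1))
    (insert (Finset.Icc 1 r)
      ((Finset.powersetCard r (Finset.Icc 2 (ℓ+1))).filter
        fun e => (e ∩ Finset.Icc 2 r).card ≤ 1))

/-- The `r`-uniform matching of size two, `M_2^r`. -/
def matching2 (r : ℕ) : HGraph r :=
  HGraph.ofEdges r (Finset.Icc 1 (2*r)) {Finset.Icc 1 r, Finset.Icc (r+1) (2*r)}

/-- The expanded triangle `𝓒_3^{2r}`. -/
def expandedTriangle (r : ℕ) : HGraph (2*r) :=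
  HGraph.ofEdges (2*r) (Finset.Icc 1 (3*r))
    {Finset.Icc 1 (2*r), Finset.Icc (r+1) (3*r), Finset.Icc 1 r ∪ Finset.Icc (2*r+1) (3*r)}

/-- The `4`-graph `𝔽_{4,3}`. -/
def F43 : HGraph 4 :=
  HGraph.ofEdges 4 (Finset.Icc 1 7)
    {({1,2,3,4} : Finset ℕ), {1,2,3,5}, {1,2,3,6}, {1,2,3,7}, {4,5,6,7}}

/-- The `3`-graph `𝔽_{3,2}`. -/
def F32 : HGraph 3 :=
  HGraph.ofEdges 3 (Finset.Icc 1 5)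
    {({1,2,3} : Finset ℕ), {1,2,4}, {1,2,5}, {3,4,5}}

/-- `H` contains pairwise vertex-disjoint copies of `F i`, `ts i` many of each. -/
def HasMixedMatching (r k : ℕ) (F : Fin k → HGraph r) (ts : Fin k → ℕ)
    (H : HGraph r) : Prop :=
  ∃ S : (i : Fin k) → Fin (ts i) → Finset ℕ,
    (∀ i j, S i j ⊆ H.verts ∧ (S i j).card = (F i).verts.card) ∧
    (∀ p q : Σ i : Fin k, Fin (ts i), p ≠ q → Disjoint (S p.1 p.2) (S q.1 q.2)) ∧
    ∀ i j, (F i).IsCopyIn (H.induce (S i j))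

/-- `ex(n, ⊔ᵢ tᵢ Fᵢ)`. -/
noncomputable def exMixedN (r k : ℕ) (F : Fin k → HGraph r) (ts : Fin k → ℕ)
    (n : ℕ) : ℕ :=
  sSup {m | ∃ H : HGraph r, H.verts.card = n ∧ ¬ HasMixedMatching r k F ts H ∧
    H.edges.card = m}

/-- `ex(n, {F₁,…,F_k})`. -/
noncomputable def exFamN (r k : ℕ) (F : Fin k → HGraph r) (n : ℕ) : ℕ :=
  sSup {m | ∃ H : HGraph r, H.verts.card = n ∧ (∀ i, ¬ (F i).IsCopyIn H) ∧
    H.edges.card = m}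

/-!
Write `a = ex(m+1,F)` and `b = ex(m,F)`. Deleting a vertex of minimum degree from an extremal
graph on `m + 1` vertices gives `(m+1)(a-b) ≤ ra`. Since `(F,P)` is a Turán pair, an extremal
graph on `m` vertices is a `P`-construction; cloning one of its vertices of maximum degree keeps it
a `P`-construction, hence `F`-free, so `(m+r)b ≤ ma`. Together with `b ≤ C(m,r)` these squeeze
`δ(m+1,F) - d(m,F)` into `[0, C(m,r-2)]`.
-/

namespace HGraph

variable {r : ℕ}

lemma card_edges_le_choose (H : HGraph r) : H.edges.card ≤ H.verts.card.choose r := by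
  rw [← Finset.card_powersetCard]
  exact Finset.card_le_card fun e he =>
    Finset.mem_powersetCard.mpr ⟨H.edges_sub e he, H.edges_card e he⟩

lemma IsCopyIn.mono {F G H : HGraph r} (h : F.IsCopyIn G) (hv : G.verts ⊆ H.verts)
    (he : G.edges ⊆ H.edges) : F.IsCopyIn H := by
  obtain ⟨f, hinj, hmaps, hedges⟩ := h
  exact ⟨f, hinj, fun v hv' => hv (hmaps v hv'), fun e he' => he (hedges e he')⟩

lemma sum_deg (H : HGraph r) : ∑ v ∈ H.verts, H.deg v = r * H.edges.card := by
  have h := Finset.sum_card_bipartiteAbove_eq_sum_card_bipartiteBelow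
    (s := H.verts) (t := H.edges) (r := fun v e => v ∈ e)
  calc ∑ v ∈ H.verts, H.deg v = ∑ e ∈ H.edges, (H.verts.filter (· ∈ e)).card := h
    _ = ∑ _e ∈ H.edges, r := Finset.sum_congr rfl fun e he => by
        rw [Finset.filter_mem_eq_inter, Finset.inter_eq_right.mpr (H.edges_sub e he),
          H.edges_card e he]
    _ = r * H.edges.card := by rw [Finset.sum_const, smul_eq_mul, mul_comm]

lemma exists_card_mul_deg_le (H : HGraph r) (hne : H.verts.Nonempty) :
    ∃ v ∈ H.verts, H.verts.card * H.deg v ≤ r * H.edges.card := by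
  obtain ⟨v, hv, hmin⟩ := Finset.exists_min_image H.verts H.deg hne
  have h := Finset.card_nsmul_le_sum _ _ _ hmin
  rw [sum_deg, smul_eq_mul] at h
  exact ⟨v, hv, h⟩

lemma exists_le_card_mul_deg (H : HGraph r) (hne : H.verts.Nonempty) :
    ∃ v ∈ H.verts, r * H.edges.card ≤ H.verts.card * H.deg v := by
  obtain ⟨v, hv, hmax⟩ := Finset.exists_max_image H.verts H.deg hne
  have h := Finset.sum_le_card_nsmul _ _ _ hmax
  rw [sum_deg, smul_eq_mul] at h
  exact ⟨v, hv, h⟩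

lemma deleteVert_edges (H : HGraph r) (v : ℕ) :
    (H.deleteVert v).edges = H.edges.filter (v ∉ ·) := by
  refine Finset.filter_true_of_mem fun e he => ?_
  obtain ⟨he, hv⟩ := Finset.mem_filter.mp he
  exact ⟨Finset.subset_erase.mpr ⟨H.edges_sub e he, hv⟩, H.edges_card e he⟩

lemma card_edges_deleteVert_add_deg (H : HGraph r) (v : ℕ) :
    (H.deleteVert v).edges.card + H.deg v = H.edges.card := by
  rw [deleteVert_edges, deg, add_comm]
  exact Finset.card_filter_add_card_filter_not _

lemma not_isCopyIn_deleteVert {F H : HGraph r} (hF : ¬ F.IsCopyIn H) (v : ℕ) :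
    ¬ F.IsCopyIn (H.deleteVert v) := fun h =>
  hF (h.mono (Finset.erase_subset v H.verts) (H.deleteVert_edges v ▸ Finset.filter_subset _ _))

end HGraph

namespace Pattern

variable {r : ℕ}

def blowup (P : Pattern r) (V : Finset ℕ) (part : ℕ → ℕ) : HGraph r :=
  HGraph.ofEdges r V ((V.powersetCard r).filter fun e => e.val.map part ∈ P.mE)

lemma mem_blowup_edges {P : Pattern r} {V : Finset ℕ} {part : ℕ → ℕ} {e : Finset ℕ} :
    e ∈ (P.blowup V part).edges ↔ e ⊆ V ∧ e.card = r ∧ e.val.map part ∈ P.mE := by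
  simp only [blowup, HGraph.ofEdges, Finset.mem_filter, Finset.mem_powersetCard]
  tauto

lemma isConstruction_blowup {P : Pattern r} {V : Finset ℕ} {part : ℕ → ℕ}
    (hpart : ∀ v ∈ V, part v ∈ P.idx) : P.IsConstruction (P.blowup V part) :=
  ⟨part, hpart, fun _ => mem_blowup_edges⟩

/-- The new vertex `w` goes into the part of `u`; the clone of an edge `e ∋ u` is
`swap u w '' e`. -/
lemma IsConstruction.exists_clone {P : Pattern r} {H : HGraph r} (hH : P.IsConstruction H)
    {u : ℕ} (hu : u ∈ H.verts) :
    ∃ G : HGraph r, P.IsConstruction G ∧ G.verts.card = H.verts.card + 1 ∧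
      H.edges.card + H.deg u ≤ G.edges.card := by
  obtain ⟨part, hpart, hedge⟩ := hH
  obtain ⟨w, hw⟩ := Infinite.exists_notMem_finset H.verts
  set part' := Function.update part w (part u)
  set σ := Equiv.swap u w
  have hpart'_eq : ∀ x ∈ H.verts, part' x = part x := fun x hx =>
    Function.update_of_ne (ne_of_mem_of_not_mem hx hw) _ _
  have hpart'_swap : ∀ x ∈ H.verts, part' (σ x) = part x := by
    intro x hx
    rcases eq_or_ne x u with rfl | hxu
    · simp [σ, part']
    · rw [Equiv.swap_apply_of_ne_of_ne hxu (ne_of_mem_of_not_mem hx hw), hpart'_eq x hx]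
  set G := P.blowup (insert w H.verts) part'
  have hGcons : P.IsConstruction G := isConstruction_blowup fun x hx => by
    rcases Finset.mem_insert.mp hx with rfl | hx
    · simpa [part'] using hpart u hu
    · exact hpart'_eq x hx ▸ hpart x hx
  set clones := (H.edges.filter (u ∈ ·)).image (Finset.map σ.toEmbedding)
  have hold : H.edges ⊆ G.edges := fun e he => by
    obtain ⟨hsub, hcard, hprof⟩ := (hedge e).mp he
    refine mem_blowup_edges.mpr ⟨hsub.trans (Finset.subset_insert w _), hcard, ?_⟩
    rwa [Multiset.map_congr rfl fun x hx => hpart'_eq x (hsub hx)]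
  have hclones : clones ⊆ G.edges := by
    intro e' he'
    obtain ⟨e, he, rfl⟩ := Finset.mem_image.mp he'
    obtain ⟨hsub, hcard, hprof⟩ := (hedge e).mp (Finset.mem_filter.mp he).1
    refine mem_blowup_edges.mpr ⟨fun y hy => ?_, by rw [Finset.card_map, hcard], ?_⟩
    · obtain ⟨x, hx, rfl⟩ := Finset.mem_map.mp hy
      rcases eq_or_ne x u with rfl | hxu
      · simp [σ]
      · simp [σ, Equiv.swap_apply_of_ne_of_ne hxu (ne_of_mem_of_not_mem (hsub hx) hw), hsub hx]
    · rw [Finset.map_val, Multiset.map_map]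
      convert hprof using 1
      exact Multiset.map_congr rfl fun x hx => hpart'_swap x (hsub hx)
  have hdisj : Disjoint H.edges clones := Finset.disjoint_left.mpr fun e he he' => by
    obtain ⟨e₀, he₀, rfl⟩ := Finset.mem_image.mp he'
    refine hw (H.edges_sub _ he (Finset.mem_map.mpr ⟨u, (Finset.mem_filter.mp he₀).2, ?_⟩))
    simp [σ]
  have hcard_clones : clones.card = H.deg u :=
    Finset.card_image_of_injective _ (Finset.map_injective σ.toEmbedding)
  refine ⟨G, hGcons, Finset.card_insert_of_notMem hw, ?_⟩
  rw [← hcard_clones, ← Finset.card_union_of_disjoint hdisj]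
  exact Finset.card_le_card (Finset.union_subset hold hclones)

end Pattern

section Turan

variable {r : ℕ}

lemma bddAbove_exN_set (n : ℕ) (F : HGraph r) :
    BddAbove {m | ∃ H : HGraph r, H.verts.card = n ∧ ¬ F.IsCopyIn H ∧ H.edges.card = m} :=
  ⟨n.choose r, by
    rintro m ⟨H, hc, -, rfl⟩
    exact hc ▸ H.card_edges_le_choose⟩

lemma le_exN {n : ℕ} {F H : HGraph r} (hc : H.verts.card = n) (hF : ¬ F.IsCopyIn H) :
    H.edges.card ≤ exN r n F :=
  le_csSup (bddAbove_exN_set n F) ⟨H, hc, hF, rfl⟩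

lemma exN_le_choose (n : ℕ) (F : HGraph r) : exN r n F ≤ n.choose r := by
  rcases Set.eq_empty_or_nonempty
    {m | ∃ H : HGraph r, H.verts.card = n ∧ ¬ F.IsCopyIn H ∧ H.edges.card = m} with h | h
  · simp [exN, h]
  · refine csSup_le h ?_
    rintro m ⟨H, hc, -, rfl⟩
    exact hc ▸ H.card_edges_le_choose

lemma exists_isExtremalFree {n : ℕ} {F : HGraph r} (h : exN r n F ≠ 0) :
    ∃ H : HGraph r, IsExtremalFree r n F H := by
  refine Nat.sSup_mem (Set.nonempty_iff_ne_empty.mpr fun h0 => h ?_) (bddAbove_exN_set n F)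
  simp [exN, h0]

lemma succ_mul_exN_succ_le (F : HGraph r) (m : ℕ) :
    (m + 1) * exN r (m + 1) F ≤ (m + 1) * exN r m F + r * exN r (m + 1) F := by
  rcases eq_or_ne (exN r (m + 1) F) 0 with h0 | h0
  · simp [h0]
  obtain ⟨H, hcard, hF, hedges⟩ := exists_isExtremalFree h0
  obtain ⟨v, hv, hdeg⟩ := H.exists_card_mul_deg_le (Finset.card_pos.mp (by omega))
  have hdel : H.edges.card ≤ exN r m F + H.deg v := by
    rw [← H.card_edges_deleteVert_add_deg v]
    refine Nat.add_le_add_right (le_exN ?_ (HGraph.not_isCopyIn_deleteVert hF v)) _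
    simp only [HGraph.deleteVert, HGraph.ofEdges]
    rw [Finset.card_erase_of_mem hv, hcard, Nat.add_sub_cancel]
  rw [hcard, hedges] at hdeg
  rw [hedges] at hdel
  nlinarith

lemma IsTuranPair.add_mul_exN_le {F : HGraph r} {P : Pattern r} (hTP : IsTuranPair r F P)
    {m : ℕ} (hm : 0 < m) : (m + r) * exN r m F ≤ m * exN r (m + 1) F := by
  rcases eq_or_ne (exN r m F) 0 with h0 | h0
  · simp [h0]
  obtain ⟨H, hcard, hF, hedges⟩ := exists_isExtremalFree h0
  obtain ⟨u, hu, hdeg⟩ := H.exists_le_card_mul_deg (Finset.card_pos.mp (by omega))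
  obtain ⟨G, hG, hGcard, hGedges⟩ := (hTP.2 H hF (hcard ▸ hedges)).exists_clone hu
  have hclone : exN r m F + H.deg u ≤ exN r (m + 1) F :=
    hedges ▸ hGedges.trans (le_exN (by rw [hGcard, hcard]) (hTP.1 G hG))
  rw [hcard, hedges] at hdeg
  nlinarith

end Turan

lemma choose_mul_le_choose_sub_two (m r : ℕ) :
    r * (r - 1) * m.choose r ≤ (m + 1 - r) * m * m.choose (r - 2) := by
  rcases Nat.lt_or_ge r 2 with hr | hr
  · interval_cases r <;> simp
  obtain ⟨s, rfl⟩ := Nat.exists_eq_add_of_le' hr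
  have h₁ := Nat.choose_succ_right_eq m (s + 1)
  have h₂ := Nat.choose_succ_right_eq m s
  calc (s + 2) * (s + 2 - 1) * m.choose (s + 2)
      = (s + 1) * (m.choose (s + 2) * (s + 2)) := by rw [show s + 2 - 1 = s + 1 by omega]; ring
    _ = (m - (s + 1)) * (m.choose s * (m - s)) := by rw [h₁, ← h₂]; ring
    _ ≤ (m - (s + 1)) * (m.choose s * m) := by gcongr; omega
    _ = (m + 1 - (s + 2)) * m * m.choose (s + 2 - 2) := by
        rw [Nat.add_sub_cancel, show m + 1 - (s + 2) = m - (s + 1) by omega]; ring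

lemma abs_sub_sub_div_le {a b m r Cr C : ℝ} (hm : 0 < m) (hrm : r < m + 1) (hr : 1 ≤ r)
    (hup : (m + 1) * a ≤ (m + 1) * b + r * a) (hlow : (m + r) * b ≤ m * a)
    (hbC : b ≤ Cr) (hchoose : r * (r - 1) * Cr ≤ (m + 1 - r) * m * C) :
    |a - b - r * b / m| ≤ C := by
  have hk : 0 < m * (m + 1 - r) := mul_pos hm (by linarith)
  have hnonneg : 0 ≤ a - b - r * b / m := by
    rw [sub_nonneg, div_le_iff₀ hm]
    linarith
  rw [abs_of_nonneg hnonneg, ← mul_le_mul_iff_of_pos_left hk]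
  calc m * (m + 1 - r) * (a - b - r * b / m)
      = m * ((m + 1 - r) * (a - b)) - (m + 1 - r) * r * b := by field_simp
    _ ≤ m * (r * b) - (m + 1 - r) * r * b := by
        have := mul_le_mul_of_nonneg_left (show (m + 1 - r) * (a - b) ≤ r * b by linarith) hm.le
        linarith
    _ = r * (r - 1) * b := by ring
    _ ≤ r * (r - 1) * Cr := by gcongr
    _ ≤ m * (m + 1 - r) * C := by linarith

section Smoothness

variable {r : ℕ}

lemma abs_deltaN_sub_dN_le_choose_of_le (F : HGraph r) {n : ℕ} (hr : 0 < r) (hnr : n ≤ r) :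
    |deltaN r n F - dN r (n - 1) F| ≤ (n - 1).choose (r - 2) := by
  have hb : exN r (n - 1) F = 0 :=
    Nat.le_zero.mp ((exN_le_choose _ F).trans (Nat.choose_eq_zero_of_lt (by omega)).le)
  have ha : exN r n F ≤ (n - 1).choose (r - 2) := by
    refine (exN_le_choose n F).trans ?_
    rcases hnr.lt_or_eq with hlt | rfl
    · simp [Nat.choose_eq_zero_of_lt hlt]
    · rw [Nat.choose_self]
      exact Nat.choose_pos (by omega)
  simp only [deltaN, dN, hb, CharP.cast_eq_zero, mul_zero, zero_div, sub_zero]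
  rw [abs_of_nonneg (Nat.cast_nonneg _)]
  exact_mod_cast ha

lemma abs_deltaN_zero_sub_dN_le_one (F : HGraph 0) (n : ℕ) :
    |deltaN 0 n F - dN 0 (n - 1) F| ≤ 1 := by
  have ha : (exN 0 n F : ℝ) ≤ 1 := by
    exact_mod_cast (exN_le_choose n F).trans_eq (Nat.choose_zero_right _)
  have hb : (exN 0 (n - 1) F : ℝ) ≤ 1 := by
    exact_mod_cast (exN_le_choose (n - 1) F).trans_eq (Nat.choose_zero_right _)
  simp only [deltaN, dN, CharP.cast_eq_zero, zero_mul, zero_div, sub_zero, abs_le]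
  constructor <;>
    linarith [(exN 0 n F).cast_nonneg (α := ℝ), (exN 0 (n - 1) F).cast_nonneg (α := ℝ)]

theorem IsTuranPair.abs_deltaN_sub_dN_le_choose {F : HGraph r} {P : Pattern r}
    (hTP : IsTuranPair r F P) (n : ℕ) :
    |deltaN r n F - dN r (n - 1) F| ≤ (n - 1).choose (r - 2) := by
  rcases Nat.eq_zero_or_pos r with rfl | hr
  · simpa using abs_deltaN_zero_sub_dN_le_one F n
  rcases le_or_gt n r with hnr | hrn
  · exact abs_deltaN_sub_dN_le_choose_of_le F hr hnr
  obtain ⟨m, rfl⟩ : ∃ m, n = m + 1 := ⟨n - 1, by omega⟩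
  have hup := succ_mul_exN_succ_le F m
  have hlow := hTP.add_mul_exN_le (m := m) (by omega)
  have hbC := exN_le_choose m F
  have hchoose := choose_mul_le_choose_sub_two m r
  simp only [deltaN, dN, Nat.add_sub_cancel]
  refine abs_sub_sub_div_le (Cr := m.choose r) (by exact_mod_cast (show 0 < m by omega))
    (by exact_mod_cast hrn) (by exact_mod_cast hr) (by exact_mod_cast hup)
    (by exact_mod_cast hlow) (by exact_mod_cast hbC) ?_
  have := (Nat.cast_le (α := ℝ)).mpr hchoose
  push_cast [Nat.cast_sub hr, Nat.cast_sub hrn.le] at this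
  exact this

end Smoothness

theorem statement_2_general (r : ℕ) (F : HGraph r) (P : Pattern r)
    (hTP : IsTuranPair r F P) :
    ∀ n : ℕ, |deltaN r n F - dN r (n-1) F| ≤ 4 * ((n-1).choose (r-2) : ℝ) :=
  fun n => (hTP.abs_deltaN_sub_dN_le_choose n).trans
    (le_mul_of_one_le_left (Nat.cast_nonneg _) (by norm_num))

/-- for a Turán pair `(F,P)` with `P` minimal, `ex(n,F)` is
`4·C(n−1,r−2)`-smooth. -/
theorem statement_2 (r : ℕ) (F : HGraph r) (P : Pattern r)
    (hmin : P.Minimal) (hTP : IsTuranPair r F P) :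
    ∀ n : ℕ, |deltaN r n F - dN r (n-1) F| ≤ 4 * ((n-1).choose (r-2) : ℝ) :=
  statement_2_general r F P hTP

end DensityCH
end

section
/- Let 𝔽_{3,2} denote the 3-graph with vertex set {1,…,5} and edge set {123, 124, 125, 345}. Then 𝔽_{3,2} is weakly vertex-extendable with respect to the semibipartite pattern; explicitly: for every δ > 0 there exist N_0 and ζ > 0 such that for every 𝔽_{3,2}-free 3-graph H on n ≥ N_0 vertices with minimum degree δ(H) ≥ (4/9 − ζ)·C(n−1,2), if there is a vertex v of H such that H − v is semibipartite, then the degree of v in H satisfies d_H(v) ≤ (4/9 + δ)·C(n−1,2). -/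
open Filter

namespace DensityCH

/-!
Let `V₁ ∪ V₂` be the semibipartition of `H - v` (every edge avoiding `v` meets `V₁` exactly once)
and `L` the link of `v`. A copy of `𝔽_{3,2}` is a pair of vertices together with an edge inside
its codegree neighbourhood. The minimum degree `(4/9 - η²) binom(n-1, 2)` forces `|V₁| ≈ n/3`,
`|V₂| ≈ 2n/3`, and every `w ∈ V₁` to form an edge with all but `O(η² n²)` pairs of `V₂`. Hence
* a vertex with an `L`-neighbour in `V₁` has only `O(η n)` `L`-neighbours in `V₂`, and
* no pair of `L` lies in the codegree neighbourhood of another, so if `L` has `η n²` pairs inside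
  `V₂`, averaging over the missing triples leaves only `O(η n²)` pairs of `L` inside `V₁`.
With few pairs of `L` inside `V₂` the first point gives `|L| ≲ |V₁| |V₂| ≈ 2n²/9`; with many,
both points give `|L| ≲ |V₂|² / 2 ≈ 2n²/9`.
-/

open Finset

section Pairs

variable {α : Type*} [DecidableEq α]

theorem eq_pair_of_card_eq_two {p : Finset α} {x y : α} (hp : #p = 2) (hx : x ∈ p) (hy : y ∈ p)
    (hxy : x ≠ y) : p = {x, y} :=
  (eq_of_subset_of_card_le (insert_subset hx (singleton_subset_iff.2 hy))
    (by rw [hp, card_pair hxy])).symm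

theorem card_filter_mem_le_of_subset_insert {P : Finset (Finset α)} {x : α} {T : Finset α}
    (h : ∀ p ∈ P, x ∈ p → #p = 2 ∧ p ⊆ insert x T) : #{p ∈ P | x ∈ p} ≤ #T := by
  calc #{p ∈ P | x ∈ p} ≤ #(T.powersetCard 1) := card_le_card_of_injOn (·.erase x) ?_ ?_
    _ = #T := by simp
  · intro p hp
    obtain ⟨hpP, hxp⟩ := mem_filter.1 hp
    obtain ⟨h2, hsub⟩ := h p hpP hxp
    rw [mem_coe, mem_powersetCard, card_erase_of_mem hxp, h2]
    exact ⟨fun y hy => (mem_insert.1 (hsub (mem_of_mem_erase hy))).resolve_left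
      (ne_of_mem_erase hy), rfl⟩
  · exact (erase_injOn' x).mono fun p hp => (mem_filter.1 hp).2

theorem card_le_mul_of_forall_exists_mem {P : Finset (Finset α)} {S : Finset α} {k : ℕ}
    (hP : ∀ p ∈ P, ∃ x ∈ S, x ∈ p) (hk : ∀ x ∈ S, #{p ∈ P | x ∈ p} ≤ k) : #P ≤ #S * k :=
  calc #P ≤ #(S.biUnion fun x => {p ∈ P | x ∈ p}) := card_le_card fun p hp => by
        obtain ⟨x, hx, hxp⟩ := hP p hp
        exact mem_biUnion.2 ⟨x, hx, mem_filter.2 ⟨hp, hxp⟩⟩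
    _ ≤ ∑ x ∈ S, #{p ∈ P | x ∈ p} := card_biUnion_le
    _ ≤ #S * k := sum_le_card_nsmul _ _ _ hk

end Pairs

namespace HGraph

variable {r : ℕ} (H : HGraph r)

theorem minDeg_le_deg {u : ℕ} (hu : u ∈ H.verts) : H.minDeg ≤ H.deg u := by
  rw [minDeg, dif_pos ⟨u, hu⟩]
  exact inf'_le _ hu

theorem mem_deleteVert_edges {v : ℕ} {e : Finset ℕ} :
    e ∈ (H.deleteVert v).edges ↔ e ∈ H.edges ∧ v ∉ e := by
  simp only [deleteVert, ofEdges, mem_filter, and_iff_left_iff_imp, and_imp]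
  exact fun he hv => ⟨subset_erase.2 ⟨H.edges_sub e he, hv⟩, H.edges_card e he⟩

def link (v : ℕ) : Finset (Finset ℕ) := {e ∈ H.edges | v ∈ e}.image (·.erase v)

variable {H}

theorem mem_link {v : ℕ} {p : Finset ℕ} : p ∈ H.link v ↔ v ∉ p ∧ insert v p ∈ H.edges := by
  simp only [link, mem_image, mem_filter]
  constructor
  · rintro ⟨e, ⟨he, hve⟩, rfl⟩
    exact ⟨notMem_erase v e, by rwa [insert_erase hve]⟩
  · rintro ⟨hvp, hp⟩
    exact ⟨insert v p, ⟨hp, mem_insert_self v p⟩, erase_insert hvp⟩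

variable (H) in
theorem card_link (v : ℕ) : #(H.link v) = H.deg v :=
  card_image_of_injOn <| (erase_injOn' v).mono fun _ he => (mem_filter.1 he).2

theorem card_of_mem_link {H : HGraph 3} {v : ℕ} {p : Finset ℕ} (hp : p ∈ H.link v) : #p = 2 := by
  have h := H.edges_card _ (mem_link.1 hp).2
  rw [card_insert_of_notMem (mem_link.1 hp).1] at h
  omega

theorem subset_of_mem_link {v : ℕ} {p : Finset ℕ} (hp : p ∈ H.link v) :
    p ⊆ H.verts.erase v := fun _ hx =>
  mem_erase.2 ⟨by rintro rfl; exact (mem_link.1 hp).1 hx,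
    H.edges_sub _ (mem_link.1 hp).2 (mem_insert_of_mem hx)⟩

theorem card_filter_mem_link_le {H : HGraph 3} (v x : ℕ) :
    #{p ∈ H.link v | x ∈ p} ≤ #H.verts :=
  card_filter_mem_le_of_subset_insert fun _ hp _ =>
    ⟨card_of_mem_link hp, (subset_of_mem_link hp).trans ((erase_subset _ _).trans
      (subset_insert _ _))⟩

theorem deg_le_card_verts_add (H : HGraph 3) (u v : ℕ) :
    H.deg u ≤ #H.verts + #{p ∈ H.link u | v ∉ p} := by
  rw [← card_link, ← card_filter_add_card_filter_not (fun p => v ∈ p)]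
  exact Nat.add_le_add_right (card_filter_mem_link_le u v) _

end HGraph

theorem F32_isCopyIn_of_edges {H : HGraph 3} {a b x y z : ℕ}
    (hab : a ≠ b) (hax : a ≠ x) (hay : a ≠ y) (haz : a ≠ z) (hbx : b ≠ x) (hby : b ≠ y)
    (hbz : b ≠ z) (hxy : x ≠ y) (hxz : x ≠ z) (hyz : y ≠ z)
    (hx : {a, b, x} ∈ H.edges) (hy : {a, b, y} ∈ H.edges) (hz : {a, b, z} ∈ H.edges)
    (hxyz : {x, y, z} ∈ H.edges) : F32.IsCopyIn H := by
  have hE : F32.edges = {{1, 2, 3}, {1, 2, 4}, {1, 2, 5}, {3, 4, 5}} := by decide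
  have habx : ∀ w ∈ ({a, b, x} : Finset ℕ), w ∈ H.verts := H.edges_sub _ hx
  have hxyz' : ∀ w ∈ ({x, y, z} : Finset ℕ), w ∈ H.verts := H.edges_sub _ hxyz
  refine ⟨fun i => if i = 1 then a else if i = 2 then b else if i = 3 then x
    else if i = 4 then y else z, ?_, ?_, ?_⟩
  · intro i hi j hj hij
    simp only [F32, HGraph.ofEdges, coe_Icc, Set.mem_Icc] at hi hj
    obtain ⟨hi1, hi5⟩ := hi
    obtain ⟨hj1, hj5⟩ := hj
    interval_cases i <;> interval_cases j <;> simp_all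
  · intro i hi
    simp only [F32, HGraph.ofEdges, mem_Icc] at hi
    obtain ⟨hi1, hi5⟩ := hi
    interval_cases i <;> simp_all
  · intro e he
    rw [hE] at he
    simp only [mem_insert, mem_singleton] at he
    rcases he with rfl | rfl | rfl | rfl <;> simpa

theorem F32_isCopyIn_of_forall_insert_mem {H : HGraph 3} {c e : Finset ℕ} (hc : #c = 2)
    (he : e ∈ H.edges) (hce : ∀ x ∈ e, insert x c ∈ H.edges) : F32.IsCopyIn H := by
  have hnot : ∀ x ∈ e, x ∉ c := fun x hx hxc => by
    have h := H.edges_card _ (hce x hx)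
    rw [insert_eq_of_mem hxc] at h
    omega
  obtain ⟨a, b, hab, rfl⟩ := card_eq_two.1 hc
  obtain ⟨x, y, z, hxy, hxz, hyz, rfl⟩ := card_eq_three.1 (H.edges_card e he)
  simp only [mem_insert, mem_singleton, forall_eq_or_imp, forall_eq, not_or] at hnot hce
  obtain ⟨⟨hxa, hxb⟩, ⟨hya, hyb⟩, ⟨hza, hzb⟩⟩ := hnot
  refine F32_isCopyIn_of_edges hab (Ne.symm hxa) (Ne.symm hya) (Ne.symm hza) (Ne.symm hxb)
    (Ne.symm hyb) (Ne.symm hzb) hxy hxz hyz ?_ ?_ ?_ he <;>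
    [convert hce.1 using 1; convert hce.2.1 using 1; convert hce.2.2 using 1] <;>
    ext <;> simp <;> tauto

namespace HGraph

variable {r : ℕ}

theorem exists_insert_notMem_edges_of_mem_link {H : HGraph 3} (hF : ¬F32.IsCopyIn H)
    {v : ℕ} {c s : Finset ℕ} (hc : c ∈ H.link v) (hs : s ∈ H.link v) :
    ∃ x ∈ s, insert x c ∉ H.edges := by
  by_contra! h
  refine hF (F32_isCopyIn_of_forall_insert_mem (card_of_mem_link hc) (mem_link.1 hs).2 ?_)
  simpa [(mem_link.1 hc).2] using h

theorem insert_pair_notMem_edges_of_mem_link {H : HGraph 3} (hF : ¬F32.IsCopyIn H)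
    {v u w y z : ℕ} (hw : {u, w} ∈ H.link v) (hy : {u, y} ∈ H.link v)
    (hz : {u, z} ∈ H.link v) : insert w {y, z} ∉ H.edges := by
  have hcentre : ∀ t, {u, t} ∈ H.link v → insert t {v, u} ∈ H.edges := fun t ht => by
    convert (mem_link.1 ht).2 using 1
    ext
    simp only [mem_insert, mem_singleton]
    tauto
  have hvu : v ≠ u := fun h => (mem_link.1 hw).1 (by simp [h])
  refine fun hwyz => hF (F32_isCopyIn_of_forall_insert_mem (card_pair hvu) hwyz ?_)
  simp only [mem_insert, mem_singleton, forall_eq_or_imp, forall_eq]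
  exact ⟨hcentre w hw, hcentre y hy, hcentre z hz⟩

def missing (H : HGraph r) (w : ℕ) (T : Finset ℕ) : Finset (Finset ℕ) :=
  {p ∈ T.powersetCard 2 | insert w p ∉ H.edges}

structure IsSemibipartition (H : HGraph r) (v : ℕ) (V₁ V₂ : Finset ℕ) : Prop where
  union_eq : V₁ ∪ V₂ = H.verts.erase v
  disjoint : Disjoint V₁ V₂
  card_inter_eq_one : ∀ e ∈ H.edges, v ∉ e → #(e ∩ V₁) = 1

theorem exists_isSemibipartition_of_semibipartite {H : HGraph r} {v : ℕ}
    (h : Semibipartite r (H.deleteVert v)) : ∃ V₁ V₂, H.IsSemibipartition v V₁ V₂ := by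
  obtain ⟨V₁, hV₁, hE⟩ := h
  exact ⟨V₁, H.verts.erase v \ V₁, union_sdiff_of_subset hV₁, disjoint_sdiff,
    fun e he hve => hE e (H.mem_deleteVert_edges.2 ⟨he, hve⟩)⟩

namespace IsSemibipartition

variable {H : HGraph 3} {v : ℕ} {V₁ V₂ : Finset ℕ} (hS : H.IsSemibipartition v V₁ V₂)
include hS

theorem mem_or_mem {x : ℕ} (hx : x ∈ H.verts) (hxv : x ≠ v) : x ∈ V₁ ∨ x ∈ V₂ :=
  mem_union.1 (hS.union_eq ▸ mem_erase.2 ⟨hxv, hx⟩)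

theorem mem_right_of_notMem_left {x : ℕ} (hx : x ∈ H.verts) (hxv : x ≠ v) (hx₁ : x ∉ V₁) :
    x ∈ V₂ :=
  (hS.mem_or_mem hx hxv).resolve_left hx₁

theorem notMem_right {x : ℕ} (hx : x ∈ V₁) : x ∉ V₂ :=
  disjoint_left.1 hS.disjoint hx

theorem mem_verts_erase_of_mem_left {x : ℕ} (hx : x ∈ V₁) : x ∈ H.verts.erase v :=
  hS.union_eq ▸ mem_union_left _ hx

theorem mem_verts_erase_of_mem_right {x : ℕ} (hx : x ∈ V₂) : x ∈ H.verts.erase v :=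
  hS.union_eq ▸ mem_union_right _ hx

theorem eq_of_mem_left {e : Finset ℕ} (he : e ∈ H.edges) (hve : v ∉ e) {x y : ℕ}
    (hx : x ∈ e) (hx₁ : x ∈ V₁) (hy : y ∈ e) (hy₁ : y ∈ V₁) : x = y :=
  card_le_one.1 (hS.card_inter_eq_one e he hve).le _ (mem_inter.2 ⟨hx, hx₁⟩) _
    (mem_inter.2 ⟨hy, hy₁⟩)

theorem card_add_card (hv : v ∈ H.verts) : #V₁ + #V₂ + 1 = #H.verts := by
  rw [← card_union_of_disjoint hS.disjoint, hS.union_eq, card_erase_of_mem hv]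
  have := card_pos.2 ⟨v, hv⟩
  omega

theorem mem_or_mem_of_mem_link {p : Finset ℕ} (hp : p ∈ H.link v) {t : ℕ} (ht : t ∈ p) :
    t ∈ V₁ ∨ t ∈ V₂ :=
  mem_union.1 (hS.union_eq ▸ subset_of_mem_link hp ht)

theorem card_filter_notMem_add_card_missing_le {w : ℕ} (hw : w ∈ V₁) :
    #{p ∈ H.link w | v ∉ p} + #(H.missing w V₂) ≤ (#V₂).choose 2 := by
  obtain ⟨hwv, -⟩ := mem_erase.1 (hS.mem_verts_erase_of_mem_left hw)
  have hsub : {p ∈ H.link w | v ∉ p} ⊆ {p ∈ V₂.powersetCard 2 | insert w p ∈ H.edges} := by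
    intro p hp
    obtain ⟨hpL, hvp⟩ := mem_filter.1 hp
    have hve : v ∉ insert w p := by simp [Ne.symm hwv, hvp]
    refine mem_filter.2 ⟨mem_powersetCard.2 ⟨fun y hy => ?_, card_of_mem_link hpL⟩,
      (mem_link.1 hpL).2⟩
    obtain ⟨hyw, hyV⟩ := mem_erase.1 (subset_of_mem_link hpL hy)
    refine hS.mem_right_of_notMem_left hyV (by rintro rfl; exact hvp hy) fun hy₁ => hyw ?_
    exact hS.eq_of_mem_left (mem_link.1 hpL).2 hve (mem_insert_of_mem hy) hy₁
      (mem_insert_self w p) hw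
  calc _ ≤ #{p ∈ V₂.powersetCard 2 | insert w p ∈ H.edges} + #(H.missing w V₂) :=
        Nat.add_le_add_right (card_le_card hsub) _
    _ = (#V₂).choose 2 := by
      rw [missing, card_filter_add_card_filter_not, card_powersetCard]

theorem card_filter_notMem_le_of_mem_right {u : ℕ} (hu : u ∈ V₂) :
    #{p ∈ H.link u | v ∉ p} ≤ #V₁ * #V₂ := by
  have hu₁ : u ∉ V₁ := fun h => hS.notMem_right h hu
  have huv : u ≠ v := (mem_erase.1 (hS.mem_verts_erase_of_mem_right hu)).1
  have hve : ∀ p ∈ {p ∈ H.link u | v ∉ p}, v ∉ insert u p := fun p hp => by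
    simp [Ne.symm huv, (mem_filter.1 hp).2]
  refine card_le_mul_of_forall_exists_mem (fun p hp => ?_) fun x hx => ?_
  · obtain ⟨x, hx⟩ := card_pos.1 ((hS.card_inter_eq_one _
      (mem_link.1 (mem_filter.1 hp).1).2 (hve p hp)).symm ▸ Nat.one_pos)
    obtain ⟨hxe, hx₁⟩ := mem_inter.1 hx
    exact ⟨x, hx₁, (mem_insert.1 hxe).resolve_left fun h => hu₁ (h ▸ hx₁)⟩
  · refine card_filter_mem_le_of_subset_insert fun p hp hxp => ⟨card_of_mem_link
      (mem_filter.1 hp).1, fun y hy => mem_insert.2 (or_iff_not_imp_left.2 fun hyx => ?_)⟩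
    obtain ⟨hyu, hyV⟩ := mem_erase.1 (subset_of_mem_link (mem_filter.1 hp).1 hy)
    refine hS.mem_right_of_notMem_left hyV (by rintro rfl; exact (mem_filter.1 hp).2 hy)
      fun hy₁ => hyx ?_
    exact hS.eq_of_mem_left (mem_link.1 (mem_filter.1 hp).1).2 (hve p hp)
      (mem_insert_of_mem hy) hy₁ (mem_insert_of_mem hxp) hx

theorem subset_insert_of_mem_link {p : Finset ℕ} (hp : p ∈ H.link v) {u : ℕ} (hup : u ∈ p) :
    p ⊆ insert u ({t ∈ V₁ | {u, t} ∈ H.link v} ∪ {t ∈ V₂ | {u, t} ∈ H.link v}) := by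
  intro t ht
  by_cases htu : t = u
  · exact htu ▸ mem_insert_self _ _
  have hut : {u, t} ∈ H.link v :=
    eq_pair_of_card_eq_two (card_of_mem_link hp) hup ht (Ne.symm htu) ▸ hp
  refine mem_insert_of_mem ?_
  rcases hS.mem_or_mem_of_mem_link hp ht with h | h
  · exact mem_union_left _ (mem_filter.2 ⟨h, hut⟩)
  · exact mem_union_right _ (mem_filter.2 ⟨h, hut⟩)

section

variable (hF : ¬F32.IsCopyIn H) {k : ℕ}
variable (hk : ∀ w ∈ V₁, ∀ j, j.choose 2 ≤ #(H.missing w V₂) → j ≤ k)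
include hF hk

theorem card_filter_mem_link_le_of_mem_link {u w : ℕ} (hw : w ∈ V₁)
    (huw : {u, w} ∈ H.link v) : #{p ∈ H.link v | u ∈ p} ≤ #V₁ + k := by
  set T := {t ∈ V₂ | {u, t} ∈ H.link v}
  have hT : #T ≤ k := hk w hw _ <| by
    rw [← card_powersetCard]
    refine card_le_card fun q hq => ?_
    obtain ⟨hqT, hq2⟩ := mem_powersetCard.1 hq
    obtain ⟨y, z, hyz, rfl⟩ := card_eq_two.1 hq2
    have hy := mem_filter.1 (hqT (mem_insert_self _ _))
    have hz := mem_filter.1 (hqT (mem_insert_of_mem (mem_singleton_self z)))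
    exact mem_filter.2 ⟨mem_powersetCard.2 ⟨hqT.trans (filter_subset _ _), card_pair hyz⟩,
      insert_pair_notMem_edges_of_mem_link hF huw hy.2 hz.2⟩
  calc #{p ∈ H.link v | u ∈ p} ≤ #({t ∈ V₁ | {u, t} ∈ H.link v} ∪ T) :=
        card_filter_mem_le_of_subset_insert
          fun p hp hup => ⟨card_of_mem_link hp, hS.subset_insert_of_mem_link hp hup⟩
    _ ≤ #V₁ + #T := (card_union_le _ _).trans (Nat.add_le_add_right (card_filter_le _ _) _)
    _ ≤ #V₁ + k := by omega

theorem card_filter_mem_link_le_card_right (hk₂ : #V₁ + k ≤ #V₂) (u : ℕ) :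
    #{p ∈ H.link v | u ∈ p} ≤ #V₂ := by
  by_cases h : ∃ w ∈ V₁, {u, w} ∈ H.link v
  · obtain ⟨w, hw, huw⟩ := h
    exact (hS.card_filter_mem_link_le_of_mem_link hF hk hw huw).trans hk₂
  have hN₁ : {t ∈ V₁ | {u, t} ∈ H.link v} = ∅ :=
    filter_eq_empty_iff.2 fun w hw huw => h ⟨w, hw, huw⟩
  refine card_filter_mem_le_of_subset_insert fun p hp hup => ⟨card_of_mem_link hp, ?_⟩
  exact (hS.subset_insert_of_mem_link hp hup).trans (insert_subset_insert _ (by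
    rw [hN₁, empty_union]; exact filter_subset _ _))

theorem deg_le_card_filter_subset_right_add (hk₂ : #V₁ + k ≤ #V₂) :
    H.deg v ≤ #{p ∈ H.link v | p ⊆ V₂} + #V₁ * #V₂ := by
  rw [← card_link, ← card_filter_add_card_filter_not (fun p => p ⊆ V₂)]
  refine Nat.add_le_add_left (card_le_mul_of_forall_exists_mem (fun p hp => ?_)
    fun x _ => ?_) _
  · obtain ⟨hpL, hp₂⟩ := mem_filter.1 hp
    obtain ⟨x, hx, hx₂⟩ := not_subset.1 hp₂
    exact ⟨x, (hS.mem_or_mem_of_mem_link hpL hx).resolve_right hx₂, hx⟩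
  · exact (card_le_card (filter_subset_filter _ (filter_subset _ _))).trans
      (hS.card_filter_mem_link_le_card_right hF hk hk₂ x)

-- `c` is the number of vertices of `V₂` with a link neighbour in `V₁`.
theorem exists_card_filter_not_subset_left_le :
    ∃ c ≤ #V₂, #{p ∈ H.link v | ¬p ⊆ V₁} ≤ c * (#V₁ + k) + (#V₂ - c).choose 2 := by
  set Q := {q ∈ V₂ | ∃ w ∈ V₁, {q, w} ∈ H.link v}
  refine ⟨#Q, card_filter_le _ _, ?_⟩
  have hsub : {p ∈ H.link v | ¬p ⊆ V₁} ⊆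
      {p ∈ H.link v | ∃ q ∈ Q, q ∈ p} ∪ (V₂ \ Q).powersetCard 2 := by
    intro p hp
    obtain ⟨hpL, hp₁⟩ := mem_filter.1 hp
    by_cases hQ : ∃ q ∈ Q, q ∈ p
    · exact mem_union_left _ (mem_filter.2 ⟨hpL, hQ⟩)
    push Not at hQ
    obtain ⟨q, hqp, hq₁⟩ := not_subset.1 hp₁
    have hq₂ := (hS.mem_or_mem_of_mem_link hpL hqp).resolve_left hq₁
    refine mem_union_right _ (mem_powersetCard.2 ⟨fun t ht => ?_, card_of_mem_link hpL⟩)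
    have ht₂ : t ∈ V₂ := by
      refine (hS.mem_or_mem_of_mem_link hpL ht).resolve_left fun ht₁ => hQ q ?_ hqp
      exact mem_filter.2 ⟨hq₂, t, ht₁, eq_pair_of_card_eq_two (card_of_mem_link hpL) hqp ht
        (by rintro rfl; exact hq₁ ht₁) ▸ hpL⟩
    exact mem_sdiff.2 ⟨ht₂, fun htQ => hQ t htQ ht⟩
  calc _ ≤ _ := card_le_card hsub
    _ ≤ _ := card_union_le _ _
    _ ≤ #Q * (#V₁ + k) + (#V₂ - #Q).choose 2 := by
      gcongr ?_ + ?_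
      · refine card_le_mul_of_forall_exists_mem (fun p hp => (mem_filter.1 hp).2)
          fun q hq => ?_
        obtain ⟨-, w, hw, hqw⟩ := mem_filter.1 hq
        exact (card_le_card (filter_subset_filter _ (filter_subset _ _))).trans
          (hS.card_filter_mem_link_le_of_mem_link hF hk hw hqw)
      · rw [card_powersetCard, card_sdiff_of_subset (filter_subset _ _)]

end

end IsSemibipartition

-- Each link pair inside `V₁` meets the non-neighbours in `V₁` of each link pair inside `V₂`;
-- summing over the latter counts the missing triples.
theorem card_filter_subset_mul_card_filter_subset_le {H : HGraph 3} (hF : ¬F32.IsCopyIn H)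
    (v : ℕ) (V₁ V₂ : Finset ℕ) :
    #{p ∈ H.link v | p ⊆ V₂} * #{p ∈ H.link v | p ⊆ V₁} ≤
      #H.verts * ∑ w ∈ V₁, #(H.missing w V₂) := by
  calc _ = ∑ c ∈ {p ∈ H.link v | p ⊆ V₂}, #{p ∈ H.link v | p ⊆ V₁} := by
        rw [sum_const, smul_eq_mul]
    _ ≤ ∑ c ∈ {p ∈ H.link v | p ⊆ V₂}, #{w ∈ V₁ | insert w c ∉ H.edges} * #H.verts := by
      refine sum_le_sum fun c hc => card_le_mul_of_forall_exists_mem (fun s hs => ?_)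
        fun x _ => ?_
      · obtain ⟨x, hxs, hx⟩ := exists_insert_notMem_edges_of_mem_link hF (mem_filter.1 hc).1
          (mem_filter.1 hs).1
        exact ⟨x, mem_filter.2 ⟨(mem_filter.1 hs).2 hxs, hx⟩, hxs⟩
      · exact (card_le_card (filter_subset_filter _ (filter_subset _ _))).trans
          (card_filter_mem_link_le v x)
    _ ≤ ∑ c ∈ V₂.powersetCard 2, #{w ∈ V₁ | insert w c ∉ H.edges} * #H.verts :=
      sum_le_sum_of_subset fun c hc => mem_powersetCard.2
        ⟨(mem_filter.1 hc).2, card_of_mem_link (mem_filter.1 hc).1⟩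
    _ = #H.verts * ∑ w ∈ V₁, #(H.missing w V₂) := by
      rw [← sum_mul, mul_comm]
      congr 1
      exact sum_card_bipartiteAbove_eq_sum_card_bipartiteBelow (fun c w => insert w c ∉ H.edges)

end HGraph

section Estimates

theorem excess_lower_bound {η m : ℝ} (hη : 0 < η) (hη₁ : η ≤ 1 / 100) (hm : 5 / η ^ 2 ≤ m) :
    (2 / 9 - η ^ 2) * m ^ 2 ≤ (4 / 9 - η ^ 2) * (m * (m - 1) / 2) - (m + 1) := by
  have h5 : 5 ≤ η ^ 2 * m := by rwa [div_le_iff₀' (by positivity)] at hm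
  have hm0 : 0 ≤ m := le_trans (by positivity) hm
  have hm1 : 1 ≤ m := by nlinarith [mul_le_mul_of_nonneg_right (pow_le_pow_left₀ hη.le hη₁ 2) hm0]
  nlinarith

theorem part_size_bounds {ζ m a b : ℝ} (hζ : 0 < ζ) (hζ₁ : ζ ≤ 1 / 100) (ha : 0 ≤ a) (hb : 0 ≤ b)
    (hab : a + b = m) (hb₂ : (2 / 9 - ζ) * m ^ 2 ≤ b * (b - 1) / 2)
    (hab₂ : (2 / 9 - ζ) * m ^ 2 ≤ a * b) :
    (1 / 3 - 3 * ζ) * m ≤ a ∧ a ≤ (1 / 3 + 2 * ζ) * m := by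
  have hm : 0 ≤ m := by linarith
  have hupper : a ≤ (1 / 3 + 2 * ζ) * m := by
    by_contra! h
    have hb' : b < (2 / 3 - 2 * ζ) * m := by linarith
    nlinarith [mul_self_lt_mul_self hb hb', mul_nonneg (mul_nonneg hζ.le (by linarith :
      (0:ℝ) ≤ 2 / 3 - 4 * ζ)) (sq_nonneg m)]
  refine ⟨?_, hupper⟩
  by_contra! h
  nlinarith [mul_pos (sub_pos.2 h) (show 0 < m - (1 / 3 - 3 * ζ) * m - a by nlinarith)]

theorem five_hundred_le_mul {η m : ℝ} (hη : 0 < η) (hη₁ : η ≤ 1 / 100) (hm : 5 / η ^ 2 ≤ m) :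
    500 ≤ η * m := by
  have h5 : 5 ≤ η * (η * m) := by
    rw [← mul_assoc, ← sq]
    rwa [div_le_iff₀' (by positivity)] at hm
  nlinarith

theorem le_of_mul_sub_one_le {η m j : ℝ} (hj : 0 ≤ j) (hηm : 3 ≤ η * m)
    (h : j * (j - 1) / 2 ≤ 4 * η ^ 2 * m ^ 2) : j ≤ 3 * η * m := by
  by_contra! hlt
  nlinarith [mul_lt_mul'' hlt (show 3 * η * m - 1 < j - 1 by linarith) (by nlinarith)
    (by nlinarith)]

theorem missing_le {ζ m a b x : ℝ} (hζ : 0 < ζ) (hζ₁ : ζ ≤ 1 / 100) (hb : 0 ≤ b)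
    (hab : a + b = m) (ha : (1 / 3 - 3 * ζ) * m ≤ a)
    (hx : (2 / 9 - ζ) * m ^ 2 + x ≤ b * (b - 1) / 2) : x ≤ 4 * ζ * m ^ 2 := by
  have hb' : b ≤ (2 / 3 + 3 * ζ) * m := by linarith
  nlinarith [mul_le_mul hb' hb' hb (by linarith), mul_nonneg (mul_nonneg hζ.le
    (by linarith : (0:ℝ) ≤ 1 - 9 / 2 * ζ)) (sq_nonneg m)]

theorem link_bound_of_few_right_pairs {η m a b d : ℝ} (hη : 0 < η) (hη₁ : η ≤ 1 / 100)
    (hηm : 500 ≤ η * m) (hab : a + b = m) (ha : (1 / 3 - 3 * η ^ 2) * m ≤ a)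
    (ha' : a ≤ (1 / 3 + 2 * η ^ 2) * m) (hd : d ≤ η * m ^ 2 + a * b) :
    d ≤ (4 / 9 + 50 * η) * (m * (m - 1) / 2) := by
  have hm : 0 ≤ m := by nlinarith
  have hη2 : η ^ 2 ≤ η / 100 := by nlinarith
  have hη2m : η ^ 2 * m ≤ m / 10000 := by nlinarith [mul_le_mul_of_nonneg_right hη2 hm]
  have hab' : a * b ≤ (2 / 9 + η ^ 2) * m ^ 2 := by
    rcases le_total a (m / 3) with h | h
    · nlinarith [mul_nonneg (sub_nonneg.2 h) (by linarith : (0:ℝ) ≤ 2 * m / 3 - a)]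
    · nlinarith [mul_le_mul_of_nonneg_right (by linarith : a - m / 3 ≤ 2 * η ^ 2 * m)
        (by linarith : (0:ℝ) ≤ 2 * m / 3 - a), mul_nonneg (mul_nonneg (sq_nonneg η)
        (by linarith : (0:ℝ) ≤ 1/3 - 6 * η ^ 2)) (sq_nonneg m)]
  nlinarith [mul_le_mul_of_nonneg_right hηm hm]

theorem link_bound_of_many_right_pairs {η m a b c k l₁₁ l₂₂ d : ℝ} (hη : 0 < η) (hη₁ : η ≤ 1 / 100)
    (hηm : 500 ≤ η * m) (hab : a + b = m) (ha₀ : 0 ≤ a) (ha : (1 / 3 - 3 * η ^ 2) * m ≤ a)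
    (ha' : a ≤ (1 / 3 + 2 * η ^ 2) * m) (hc : 0 ≤ c) (hcb : c ≤ b) (hk : k ≤ 3 * η * m)
    (hl₁₁ : 0 ≤ l₁₁) (hl₂₂ : η * m ^ 2 < l₂₂)
    (hprod : l₂₂ * l₁₁ ≤ (m + 1) * (a * (4 * η ^ 2 * m ^ 2)))
    (hd : d ≤ l₁₁ + (c * (a + k) + (b - c) * (b - c - 1) / 2)) :
    d ≤ (4 / 9 + 50 * η) * (m * (m - 1) / 2) := by
  have hm : 0 ≤ m := by nlinarith
  have hη2 : η ^ 2 ≤ η / 100 := by nlinarith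
  have hη2m : η ^ 2 * m ≤ m / 10000 := by nlinarith [mul_le_mul_of_nonneg_right hη2 hm]
  have hl : l₁₁ ≤ 4 * η * (m + 1) * m := by
    have h1 : η * m ^ 2 * l₁₁ ≤ η * m ^ 2 * (4 * η * (m + 1) * a) := by
      nlinarith [mul_le_mul_of_nonneg_right hl₂₂.le hl₁₁]
    have h2 := le_of_mul_le_mul_left h1 (by nlinarith)
    nlinarith
  have hb' : b ≤ (2 / 3 + 3 * η ^ 2) * m := by linarith
  have hb0 : 0 ≤ b := le_trans hc hcb
  have hbb : b * b ≤ (4 / 9 + 6 * η ^ 2) * m ^ 2 := by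
    nlinarith [mul_le_mul hb' hb' hb0 (by nlinarith), mul_nonneg (mul_nonneg (sq_nonneg η)
      (by nlinarith : (0:ℝ) ≤ 1 - 9 * η ^ 2)) (sq_nonneg m)]
  have hmix : c * (a + k) + (b - c) * (b - c - 1) / 2 ≤ b * b / 2 + 4 * η * m ^ 2 := by
    have h3 : c * (a + k - b / 2) ≤ 4 * η * m * b := by
      rcases le_total (a + k - b / 2) 0 with h | h
      · nlinarith [mul_nonpos_of_nonneg_of_nonpos hc h]
      · nlinarith [mul_le_mul hcb (show a + k - b / 2 ≤ 4 * η * m by nlinarith) h hb0]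
    nlinarith [mul_nonneg hc (sub_nonneg.2 hcb)]
  nlinarith [mul_le_mul_of_nonneg_right hηm hm]

end Estimates

namespace HGraph.IsSemibipartition

variable {H : HGraph 3} {v : ℕ} {V₁ V₂ : Finset ℕ} (hS : H.IsSemibipartition v V₁ V₂)
include hS

theorem excess_bounds {η : ℝ} (hη : 0 < η) (hη₁ : η ≤ 1 / 100) {m : ℕ}
    (hm : #H.verts = m + 1) (hm₀ : 5 / η ^ 2 ≤ m)
    (hmin : ∀ u ∈ H.verts, (4 / 9 - η ^ 2) * (m.choose 2 : ℝ) ≤ H.deg u) :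
    (∀ w ∈ V₁, (2 / 9 - η ^ 2) * (m : ℝ) ^ 2 + #(H.missing w V₂) ≤ (#V₂ : ℝ) * (#V₂ - 1) / 2) ∧
      ∀ u ∈ V₂, (2 / 9 - η ^ 2) * (m : ℝ) ^ 2 ≤ #V₁ * #V₂ := by
  have hexc := excess_lower_bound hη hη₁ hm₀
  simp only [Nat.cast_choose_two] at hmin
  refine ⟨fun w hw => ?_, fun u hu => ?_⟩
  · have h1 := H.deg_le_card_verts_add w v
    have h2 := hS.card_filter_notMem_add_card_missing_le hw
    have h3 := hmin w (mem_of_mem_erase (hS.mem_verts_erase_of_mem_left hw))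
    have h4 : (H.deg w : ℝ) + #(H.missing w V₂) ≤ m + 1 + ((#V₂).choose 2 : ℕ) := by
      exact_mod_cast (by omega)
    rw [Nat.cast_choose_two] at h4
    linarith
  · have h1 := H.deg_le_card_verts_add u v
    have h2 := hS.card_filter_notMem_le_of_mem_right hu
    have h3 := hmin u (mem_of_mem_erase (hS.mem_verts_erase_of_mem_right hu))
    have h4 : (H.deg u : ℝ) ≤ m + 1 + #V₁ * #V₂ := by exact_mod_cast (by omega)
    linarith

theorem card_left_bounds (hv : v ∈ H.verts) {η : ℝ} (hη : 0 < η) (hη₁ : η ≤ 1 / 100) {m : ℕ}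
    (hm : #H.verts = m + 1) (hm₀ : 5 / η ^ 2 ≤ m)
    (hmin : ∀ u ∈ H.verts, (4 / 9 - η ^ 2) * (m.choose 2 : ℝ) ≤ H.deg u) :
    (1 / 3 - 3 * η ^ 2) * m ≤ (#V₁ : ℝ) ∧ (#V₁ : ℝ) ≤ (1 / 3 + 2 * η ^ 2) * m ∧
      ∀ w ∈ V₁, (#(H.missing w V₂) : ℝ) ≤ 4 * η ^ 2 * m ^ 2 := by
  obtain ⟨hleft, hright⟩ := hS.excess_bounds hη hη₁ hm hm₀ hmin
  have hab := hS.card_add_card hv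
  have hm₁ : 0 < m := Nat.cast_pos.1 (lt_of_lt_of_le (by positivity) hm₀)
  have hpos : 0 < (2 / 9 - η ^ 2) * (m : ℝ) ^ 2 := by
    have : η ^ 2 < 2 / 9 := by nlinarith
    positivity
  obtain ⟨w₀, hw₀⟩ : V₁.Nonempty := by
    by_contra h
    rw [not_nonempty_iff_eq_empty] at h
    obtain ⟨u, hu⟩ : V₂.Nonempty := card_pos.1 (by rw [h, card_empty] at hab; omega)
    have := hright u hu
    rw [h, card_empty, Nat.cast_zero, zero_mul] at this
    linarith
  obtain ⟨u₀, hu₀⟩ : V₂.Nonempty := by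
    by_contra h
    rw [not_nonempty_iff_eq_empty] at h
    have := hleft w₀ hw₀
    rw [h, card_empty, Nat.cast_zero] at this
    linarith [(Nat.cast_nonneg _ : (0 : ℝ) ≤ #(H.missing w₀ ∅))]
  have hab' : (#V₁ : ℝ) + #V₂ = m := by exact_mod_cast (by omega : #V₁ + #V₂ = m)
  obtain ⟨ha, ha'⟩ := part_size_bounds (sq_pos_of_pos hη) (by nlinarith) (Nat.cast_nonneg _)
    (Nat.cast_nonneg _) hab' (by linarith [hleft w₀ hw₀, (Nat.cast_nonneg _ :
      (0 : ℝ) ≤ #(H.missing w₀ V₂))]) (hright u₀ hu₀)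
  exact ⟨ha, ha', fun w hw =>
    missing_le (sq_pos_of_pos hη) (by nlinarith) (Nat.cast_nonneg _) hab' ha (hleft w hw)⟩

theorem deg_le_of_minDeg (hF : ¬F32.IsCopyIn H) (hv : v ∈ H.verts) {η : ℝ} (hη : 0 < η)
    (hη₁ : η ≤ 1 / 100) {m : ℕ} (hm : #H.verts = m + 1) (hm₀ : 5 / η ^ 2 ≤ m)
    (hmin : ∀ u ∈ H.verts, (4 / 9 - η ^ 2) * (m.choose 2 : ℝ) ≤ H.deg u) :
    (H.deg v : ℝ) ≤ (4 / 9 + 50 * η) * m.choose 2 := by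
  obtain ⟨ha, ha', hmiss⟩ := hS.card_left_bounds hv hη hη₁ hm hm₀ hmin
  have hab : (#V₁ : ℝ) + #V₂ = m := by
    have := hS.card_add_card hv
    exact_mod_cast (by omega : #V₁ + #V₂ = m)
  have hηm := five_hundred_le_mul hη hη₁ hm₀
  set k := ⌊3 * η * m⌋₊
  have hkm : (k : ℝ) ≤ 3 * η * m := Nat.floor_le (by positivity)
  have hk : ∀ w ∈ V₁, ∀ j, j.choose 2 ≤ #(H.missing w V₂) → j ≤ k := fun w hw j hj => by
    refine Nat.le_floor (le_of_mul_sub_one_le (Nat.cast_nonneg j) (by linarith) ?_)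
    rw [← Nat.cast_choose_two]
    exact (Nat.cast_le.2 hj).trans (hmiss w hw)
  rw [Nat.cast_choose_two]
  by_cases hcase : (#{p ∈ H.link v | p ⊆ V₂} : ℝ) ≤ η * m ^ 2
  · have hk₂ : #V₁ + k ≤ #V₂ := by
      have : (#V₁ : ℝ) + k ≤ #V₂ := by nlinarith
      exact_mod_cast this
    have h : (H.deg v : ℝ) ≤ #{p ∈ H.link v | p ⊆ V₂} + #V₁ * #V₂ := by
      exact_mod_cast hS.deg_le_card_filter_subset_right_add hF hk hk₂
    exact link_bound_of_few_right_pairs hη hη₁ hηm hab ha ha' (by linarith)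
  · obtain ⟨c, hc, hcl⟩ := hS.exists_card_filter_not_subset_left_le hF hk
    have hprod := card_filter_subset_mul_card_filter_subset_le hF v V₁ V₂
    have hsum : ∑ w ∈ V₁, (#(H.missing w V₂) : ℝ) ≤ #V₁ * (4 * η ^ 2 * m ^ 2) := by
      simpa using sum_le_sum hmiss
    have hdeg : H.deg v = #{p ∈ H.link v | p ⊆ V₁} + #{p ∈ H.link v | ¬p ⊆ V₁} := by
      rw [← card_link, card_filter_add_card_filter_not]
    refine link_bound_of_many_right_pairs (l₁₁ := #{p ∈ H.link v | p ⊆ V₁}) hη hη₁ hηm hab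
      (Nat.cast_nonneg _) ha ha' (Nat.cast_nonneg c) (by exact_mod_cast hc) hkm
      (Nat.cast_nonneg _) (not_le.1 hcase) ?_ ?_
    · have h := (Nat.cast_le (α := ℝ)).2 hprod
      push_cast [hm] at h
      exact h.trans (mul_le_mul_of_nonneg_left hsum (by positivity))
    · have h := (Nat.cast_le (α := ℝ)).2 hcl
      rw [hdeg]
      push_cast [Nat.cast_choose_two, Nat.cast_sub hc] at h ⊢
      linarith

end HGraph.IsSemibipartition

/-- `𝔽_{3,2}` is weakly vertex-extendable with respect to the
semibipartite pattern. -/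
theorem statement_17 :
    ∀ δ : ℝ, 0 < δ → ∃ N₀ : ℕ, ∃ ζ : ℝ, 0 < ζ ∧
      ∀ H : HGraph 3, N₀ ≤ H.verts.card → ¬ F32.IsCopyIn H →
        (4/9 - ζ) * (((H.verts.card - 1).choose 2 : ℕ) : ℝ) ≤ (H.minDeg : ℝ) →
        ∀ v ∈ H.verts, Semibipartite 3 (H.deleteVert v) →
          (H.deg v : ℝ) ≤ (4/9 + δ) * (((H.verts.card - 1).choose 2 : ℕ) : ℝ) := by
  intro δ hδ
  set η := min δ (1 / 2) / 50
  have hη : 0 < η := by positivity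
  have hηδ : 50 * η ≤ δ := by
    simp only [η, mul_div_cancel₀ _ (by norm_num : (50 : ℝ) ≠ 0)]
    exact min_le_left δ (1 / 2)
  have hη₁ : η ≤ 1 / 100 := by
    simp only [η]
    linarith [min_le_right δ (1 / 2)]
  refine ⟨⌈5 / η ^ 2⌉₊ + 1, η ^ 2, by positivity, fun H hN hF hmin v hv hsemi => ?_⟩
  obtain ⟨V₁, V₂, hS⟩ := HGraph.exists_isSemibipartition_of_semibipartite hsemi
  have hm₀ : 5 / η ^ 2 ≤ ((#H.verts - 1 : ℕ) : ℝ) :=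
    (Nat.le_ceil _).trans (Nat.cast_le.2 (by omega))
  calc (H.deg v : ℝ) ≤ (4 / 9 + 50 * η) * ((#H.verts - 1).choose 2 : ℕ) :=
        hS.deg_le_of_minDeg hF hv hη hη₁ (by have := card_pos.2 ⟨v, hv⟩; omega) hm₀
          fun u hu => hmin.trans (by exact_mod_cast H.minDeg_le_deg hu)
    _ ≤ _ := by gcongr

end DensityCH
end
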